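/- Let G = (V,E) be a nontrivial graph with V = {v_1,…,v_n}, and let G' be the graph constructed from G as follows: the vertex set of G' is V_1 ∪ V_2 ∪ U_1 ∪ U_2, where V_k = {v_i^k : i ∈ [n]} and U_k = {u_i^k : i ∈ [n]} for k ∈ [2]; the edge set of G' consists of all edges between distinct vertices of V_1 ∪ U_1, together with the edges v_i^2 v_j^1 and u_i^2 u_j^1 for each i ∈ [n] and each v_j ∈ N_G[v_i]. Then, for every positive integer k, the graph G has a dominating set of cardinality at most k if and only if G' has a semipaired dominating set of cardinality at most 2k. -/

import Mathlib

/-!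
A dominating set `D` of `G` gives the semipaired dominating set `{v_i^1, u_i^1 : i ∈ D}` of `G'`,
each `v_i^1` paired with its neighbour `u_i^1`. Conversely, since the only neighbours of `v_i^2`
are the `v_j^1` with `j ∈ N_G[i]`, the indices of the vertices of a dominating set `S` of `G'`
lying in `V_1 ∪ V_2` dominate `G`, and likewise for `U_1 ∪ U_2`; one of these two parts of `S`
has at most `|S| / 2` elements.
-/

/-- `D` is a dominating set of `G`. -/
def IsDomSet {V : Type*} (G : SimpleGraph V) (D : Finset V) : Prop :=
  ∀ v, v ∉ D → ∃ u ∈ D, G.Adj u v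

/-- `D` is a semipaired dominating set of `G`: a dominating set that can be partitioned
into 2-element subsets (given by a fixed-point-free involution on `D`) such that the two
vertices in each pair are at distance at most 2 (adjacent or having a common neighbor). -/
def IsSemiPD {V : Type*} (G : SimpleGraph V) (D : Finset V) : Prop :=
  IsDomSet G D ∧ ∃ f : V → V, ∀ v ∈ D, f v ∈ D ∧ f v ≠ v ∧ f (f v) = v ∧
    (G.Adj v (f v) ∨ ∃ w, G.Adj v w ∧ G.Adj (f v) w)

/-- Vertices of the graph `G'` constructed from a graph `G` with `n` vertices. -/
inductive SV (n : ℕ) where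
  | v1 : Fin n → SV n
  | u1 : Fin n → SV n
  | v2 : Fin n → SV n
  | u2 : Fin n → SV n
deriving DecidableEq

/-- The defining relation of `G'`: all pairs of (distinct) vertices in `V₁ ∪ U₁` are
adjacent, and `v_i^2 v_j^1` and `u_i^2 u_j^1` are edges whenever `v_j ∈ N_G[v_i]`,
i.e. `j = i` or `v_i v_j ∈ E(G)`. -/
def sRel {n : ℕ} (G : SimpleGraph (Fin n)) : SV n → SV n → Prop
  | .v1 _, .v1 _ => True
  | .v1 _, .u1 _ => True
  | .u1 _, .v1 _ => True
  | .u1 _, .u1 _ => True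
  | .v2 i, .v1 j => i = j ∨ G.Adj i j
  | .u2 i, .u1 j => i = j ∨ G.Adj i j
  | _, _ => False

/-- The graph `G'` constructed from `G`. -/
def bigG' {n : ℕ} (G : SimpleGraph (Fin n)) : SimpleGraph (SV n) :=
  SimpleGraph.fromRel (sRel G)

theorem IsDomSet.exists_eq_or_adj {V : Type*} {G : SimpleGraph V} {D : Finset V}
    (hD : IsDomSet G D) (v : V) : ∃ u ∈ D, u = v ∨ G.Adj u v := by
  by_cases hv : v ∈ D
  · exact ⟨v, hv, Or.inl rfl⟩
  · obtain ⟨u, hu, huv⟩ := hD v hv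
    exact ⟨u, hu, Or.inr huv⟩

theorem IsDomSet.image_filter {V W : Type*} [DecidableEq V] {G : SimpleGraph V}
    {H : SimpleGraph W} {S : Finset W} (hS : IsDomSet H S) (p : W → Prop) [DecidablePred p]
    (π : W → V) (top bot : V → W) (hp_top : ∀ i, p (top i)) (hp_bot : ∀ i, p (bot i))
    (hπ_top : ∀ i, π (top i) = i) (hπ_bot : ∀ i, π (bot i) = i)
    (hbot : ∀ i w, H.Adj w (bot i) → ∃ j, w = top j ∧ (j = i ∨ G.Adj j i)) :
    IsDomSet G ((S.filter p).image π) := by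
  have mem_image : ∀ w ∈ S, p w → π w ∈ (S.filter p).image π := fun w hw hpw =>
    Finset.mem_image_of_mem π (Finset.mem_filter.2 ⟨hw, hpw⟩)
  intro i hi
  have htop : top i ∉ S := fun h => hi (hπ_top i ▸ mem_image _ h (hp_top i))
  have hbot_notMem : bot i ∉ S := fun h => hi (hπ_bot i ▸ mem_image _ h (hp_bot i))
  obtain ⟨w, hw, hadj⟩ := hS _ hbot_notMem
  obtain ⟨j, rfl, rfl | hji⟩ := hbot i w hadj
  · exact absurd hw htop
  · exact ⟨j, hπ_top j ▸ mem_image _ hw (hp_top j), hji⟩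

namespace SV

variable {n : ℕ}

def index : SV n → Fin n
  | v1 i | u1 i | v2 i | u2 i => i

def IsVSide : SV n → Prop
  | v1 _ | v2 _ => True
  | u1 _ | u2 _ => False

instance : DecidablePred (IsVSide (n := n)) := fun x => by
  cases x <;> unfold IsVSide <;> infer_instance

def swapLayerOne : SV n → SV n
  | v1 i => u1 i
  | u1 i => v1 i
  | x => x

end SV

section bigG'

variable {n : ℕ} {G : SimpleGraph (Fin n)}

@[simp]
theorem bigG'_adj_v1_u1 (i j : Fin n) : (bigG' G).Adj (.v1 i) (.u1 j) := by
  simp [bigG', sRel]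

@[simp]
theorem bigG'_adj_u1_v1 (i j : Fin n) : (bigG' G).Adj (.u1 i) (.v1 j) :=
  (bigG'_adj_v1_u1 j i).symm

theorem bigG'_adj_v1_v2 {i j : Fin n} (h : i = j ∨ G.Adj i j) :
    (bigG' G).Adj (.v1 i) (.v2 j) := by
  simp only [bigG', SimpleGraph.fromRel_adj, sRel, ne_eq, reduceCtorEq, not_false_eq_true,
    true_and]
  exact Or.inr (h.imp Eq.symm G.adj_symm)

theorem bigG'_adj_u1_u2 {i j : Fin n} (h : i = j ∨ G.Adj i j) :
    (bigG' G).Adj (.u1 i) (.u2 j) := by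
  simp only [bigG', SimpleGraph.fromRel_adj, sRel, ne_eq, reduceCtorEq, not_false_eq_true,
    true_and]
  exact Or.inr (h.imp Eq.symm G.adj_symm)

theorem bigG'_adj_v2 {i : Fin n} {x : SV n} (h : (bigG' G).Adj x (.v2 i)) :
    ∃ j, x = .v1 j ∧ (j = i ∨ G.Adj j i) := by
  cases x <;> simp_all [bigG', sRel, eq_comm, G.adj_comm]

theorem bigG'_adj_u2 {i : Fin n} {x : SV n} (h : (bigG' G).Adj x (.u2 i)) :
    ∃ j, x = .u1 j ∧ (j = i ∨ G.Adj j i) := by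
  cases x <;> simp_all [bigG', sRel, eq_comm, G.adj_comm]

theorem isSemiPD_bigG'_of_isDomSet {D : Finset (Fin n)} (hD : IsDomSet G D) :
    IsSemiPD (bigG' G) (D.image .v1 ∪ D.image .u1) := by
  refine ⟨fun x _ => ?_, SV.swapLayerOne, ?_⟩
  · obtain ⟨i, hi, hij⟩ := hD.exists_eq_or_adj x.index
    cases x with
    | v1 j => exact ⟨.u1 i, by simp [hi], bigG'_adj_u1_v1 i j⟩
    | u1 j => exact ⟨.v1 i, by simp [hi], bigG'_adj_v1_u1 i j⟩
    | v2 j => exact ⟨.v1 i, by simp [hi], bigG'_adj_v1_v2 hij⟩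
    | u2 j => exact ⟨.u1 i, by simp [hi], bigG'_adj_u1_u2 hij⟩
  · intro x hx
    simp only [Finset.mem_union, Finset.mem_image] at hx
    rcases hx with ⟨i, hi, rfl⟩ | ⟨i, hi, rfl⟩ <;> simp [SV.swapLayerOne, hi]

theorem isDomSet_image_index_vSide {S : Finset (SV n)} (hS : IsDomSet (bigG' G) S) :
    IsDomSet G ((S.filter SV.IsVSide).image SV.index) :=
  hS.image_filter _ _ SV.v1 SV.v2 (fun _ => trivial) (fun _ => trivial) (fun _ => rfl)
    (fun _ => rfl) fun _ _ => bigG'_adj_v2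

theorem isDomSet_image_index_uSide {S : Finset (SV n)} (hS : IsDomSet (bigG' G) S) :
    IsDomSet G ((S.filter fun x => ¬x.IsVSide).image SV.index) :=
  hS.image_filter _ _ SV.u1 SV.u2 (fun _ => not_false) (fun _ => not_false) (fun _ => rfl)
    (fun _ => rfl) fun _ _ => bigG'_adj_u2

end bigG'

theorem domSet_iff_semiPD_bigG'_general {n : ℕ} (G : SimpleGraph (Fin n))
    (k : ℕ) :
    (∃ D : Finset (Fin n), IsDomSet G D ∧ D.card ≤ k) ↔
    (∃ D : Finset (SV n), IsSemiPD (bigG' G) D ∧ D.card ≤ 2 * k) := by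
  constructor
  · rintro ⟨D, hD, hcard⟩
    refine ⟨_, isSemiPD_bigG'_of_isDomSet hD, ?_⟩
    calc (D.image SV.v1 ∪ D.image SV.u1).card
        ≤ (D.image SV.v1).card + (D.image SV.u1).card := Finset.card_union_le _ _
      _ ≤ D.card + D.card := add_le_add Finset.card_image_le Finset.card_image_le
      _ ≤ 2 * k := by omega
  · rintro ⟨S, ⟨hS, -⟩, hcard⟩
    have hsplit := S.card_filter_add_card_filter_not SV.IsVSide
    have hV := (S.filter SV.IsVSide).card_image_le (f := SV.index)
    have hU := (S.filter fun x => ¬x.IsVSide).card_image_le (f := SV.index)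
    by_cases hVk : ((S.filter SV.IsVSide).image SV.index).card ≤ k
    · exact ⟨_, isDomSet_image_index_vSide hS, hVk⟩
    · exact ⟨_, isDomSet_image_index_uSide hS, by omega⟩

/-- Let `G'` be the split graph constructed from a nontrivial graph `G` with `n`
vertices. For every positive integer `k`, `G` has a dominating set of cardinality
at most `k` iff `G'` has a semipaired dominating set of cardinality at most `2k`. -/
theorem domSet_iff_semiPD_bigG' {n : ℕ} (hn : 2 ≤ n) (G : SimpleGraph (Fin n))
    (k : ℕ) (hk : 0 < k) :
    (∃ D : Finset (Fin n), IsDomSet G D ∧ D.card ≤ k) ↔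
    (∃ D : Finset (SV n), IsSemiPD (bigG' G) D ∧ D.card ≤ 2 * k) :=
  domSet_iff_semiPD_bigG'_general G k
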